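/- Let G be a connected simple graph and f a natural number. If u is an alternative node for v, then for every vertex w with w ∉ {u,v}, it holds that dist(v,w) ≤ 2f+1 if and only if dist(u,w) ≤ 2f+1. -/
import Mathlib

/-- `u` is an alternative node for `v` (with respect to the parameter `f`):
`u ≠ v`, `dist u v ≤ f`, and there are at most `f - 2` vertices
`q ∈ B_{f+1}(v) ∪ B_{f+1}(u)` with `q ∉ {u, v}` and `dist q v ≠ dist q u`. -/
def IsAlternativeNode {V : Type*} (G : SimpleGraph V) (f : ℕ) (u v : V) : Prop :=
  u ≠ v ∧ G.dist u v ≤ f ∧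
    {q : V | (G.dist v q ≤ f + 1 ∨ G.dist u q ≤ f + 1) ∧ q ≠ u ∧ q ≠ v ∧
      G.dist q v ≠ G.dist q u}.encard ≤ (f - 2 : ℕ)

open SimpleGraph

private lemma dist_getVert_le' {V : Type*} {G : SimpleGraph V} (hG : G.Connected) {v w : V}
    (p : G.Walk v w) (j : ℕ) : G.dist v (p.getVert j) ≤ j := by
  induction j with
  | zero => simp
  | succ n ih =>
    by_cases h : n < p.length
    · have hadj := p.adj_getVert_succ h
      have h1 : G.dist (p.getVert n) (p.getVert (n + 1)) = 1 :=
        (SimpleGraph.dist_eq_one_iff_adj).mpr hadj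
      have := hG.dist_triangle (u := v) (v := p.getVert n) (w := p.getVert (n + 1))
      omega
    · rw [p.getVert_of_length_le (by omega)]
      have := ih
      rw [p.getVert_of_length_le (by omega)] at this
      omega

private lemma dist_getVert_right' {V : Type*} {G : SimpleGraph V} (hG : G.Connected) {v w : V}
    (p : G.Walk v w) {j : ℕ} (hj : j ≤ p.length) :
    G.dist (p.getVert j) w ≤ p.length - j := by
  have := dist_getVert_le' hG p.reverse (p.length - j)
  rw [p.getVert_reverse] at this
  have hjj : p.length - (p.length - j) = j := by omega
  rw [hjj] at this
  rwa [SimpleGraph.dist_comm]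

private lemma key_lemma {V : Type*} (G : SimpleGraph V) (hG : G.Connected)
    (f : ℕ) (u v : V) (hne : u ≠ v) (hd : G.dist u v ≤ f)
    (hen : {q : V | (G.dist v q ≤ f + 1 ∨ G.dist u q ≤ f + 1) ∧ q ≠ u ∧ q ≠ v ∧
      G.dist q v ≠ G.dist q u}.encard ≤ (f - 2 : ℕ)) :
    ∀ w : V, G.dist v w ≤ 2 * f + 1 → G.dist u w ≤ 2 * f + 1 := by
  intro w hvw
  by_cases hsmall : G.dist v w ≤ f + 1
  · have := hG.dist_triangle (u := u) (v := v) (w := w)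
    omega
  push_neg at hsmall
  -- get a geodesic from v to w
  obtain ⟨p, hp⟩ := (hG v w).exists_walk_length_eq_dist
  set d := G.dist v w with hdvw
  -- distances along the geodesic are exact
  have hexact : ∀ j, j ≤ d → G.dist v (p.getVert j) = j := by
    intro j hj
    have h1 : G.dist v (p.getVert j) ≤ j := dist_getVert_le' hG p j
    have h2 : G.dist (p.getVert j) w ≤ d - j := by
      have := dist_getVert_right' hG p (j := j) (by omega)
      omega
    have h3 := hG.dist_triangle (u := v) (v := p.getVert j) (w := w)
    omega
  -- find a good pivot
  have hpivot : ∃ j, 1 ≤ j ∧ j ≤ f + 1 ∧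
      (p.getVert j = u ∨ G.dist (p.getVert j) v = G.dist (p.getVert j) u) := by
    by_contra hcon
    push_neg at hcon
    set S := {q : V | (G.dist v q ≤ f + 1 ∨ G.dist u q ≤ f + 1) ∧ q ≠ u ∧ q ≠ v ∧
      G.dist q v ≠ G.dist q u} with hS
    have hsub : p.getVert '' (Set.Icc 1 (f + 1)) ⊆ S := by
      rintro x ⟨j, ⟨hj1, hj2⟩, rfl⟩
      obtain ⟨hju, hjd⟩ := hcon j hj1 hj2
      have hjv : G.dist v (p.getVert j) = j := hexact j (by omega)
      refine ⟨Or.inl (by omega), hju, ?_, hjd⟩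
      intro hEq
      rw [hEq, SimpleGraph.dist_self] at hjv
      omega
    have hinj : Set.InjOn p.getVert (Set.Icc 1 (f + 1)) := by
      rintro a ⟨ha1, ha2⟩ b ⟨hb1, hb2⟩ hab
      have hA : G.dist v (p.getVert a) = a := hexact a (by omega)
      have hB : G.dist v (p.getVert b) = b := hexact b (by omega)
      rw [hab] at hA
      omega
    have h1 : (p.getVert '' (Set.Icc 1 (f + 1))).encard
        = (Set.Icc 1 (f + 1) : Set ℕ).encard := hinj.encard_image
    have h2 : (Set.Icc 1 (f + 1) : Set ℕ).encard = (f + 1 : ℕ) := by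
      rw [← Finset.coe_Icc, Set.encard_coe_eq_coe_finsetCard]
      simp [Nat.card_Icc]
    have h3 := Set.encard_mono hsub
    rw [h1, h2] at h3
    have := h3.trans hen
    rw [Nat.cast_le] at this
    omega
  obtain ⟨j, hj1, hj2, hcase⟩ := hpivot
  have hqw : G.dist (p.getVert j) w ≤ d - j := by
    have := dist_getVert_right' hG p (j := j) (by omega)
    omega
  rcases hcase with hqu | hqd
  · rw [← hqu]
    omega
  · have hqv : G.dist v (p.getVert j) = j := hexact j (by omega)
    have h4 := hG.dist_triangle (u := u) (v := p.getVert j) (w := w)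
    have e1 : G.dist u (p.getVert j) = j := by
      rw [SimpleGraph.dist_comm, ← hqd, SimpleGraph.dist_comm]
      exact hqv
    omega

/-- If `u` is an alternative node for `v`, then for every vertex `w ∉ {u, v}`,
`dist v w ≤ 2f + 1` if and only if `dist u w ≤ 2f + 1`. -/
theorem alternative_node_covers_iff {V : Type*} (G : SimpleGraph V)
    (hG : G.Connected) (f : ℕ) (u v : V) (halt : IsAlternativeNode G f u v) :
    ∀ w : V, w ≠ u → w ≠ v → (G.dist v w ≤ 2 * f + 1 ↔ G.dist u w ≤ 2 * f + 1) := by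
  obtain ⟨hne, hd, hen⟩ := halt
  intro w _ _
  constructor
  · exact key_lemma G hG f u v hne hd hen w
  · have hen' : {q : V | (G.dist u q ≤ f + 1 ∨ G.dist v q ≤ f + 1) ∧ q ≠ v ∧ q ≠ u ∧
        G.dist q u ≠ G.dist q v}.encard ≤ (f - 2 : ℕ) := by
      convert hen using 2
      ext q
      constructor
      · rintro ⟨h1, h2, h3, h4⟩; exact ⟨h1.symm, h3, h2, h4.symm⟩
      · rintro ⟨h1, h2, h3, h4⟩; exact ⟨h1.symm, h3, h2, h4.symm⟩
    exact key_lemma G hG f v u hne.symm (by rwa [SimpleGraph.dist_comm]) hen' w
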